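/- arXiv:2406.13670 — 2 statements merged into one kernel-verified Lean document; each statement's English description precedes it below -/
import Mathlib

section
/- Let Δ be a simplicial forest, let F be a good leaf of Δ, and set f = ∏_{v ∈ F} x_v. Then for every 1 ≤ k ≤ ν(Δ), the colon ideal I(Δ)^{[k+1]} : (f) equals I(Δ∖F)^{[k]} (where a squarefree power is the zero ideal when the exponent exceeds the relevant matching number). -/
noncomputable section

open Finset MvPolynomial

/-- A simplicial complex on the vertex type `V`: a finite, nonempty collection of
finite subsets of `V` that is closed under taking subsets. -/
structure SimplicialComplex (V : Type) [DecidableEq V] : Type where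
  faces : Finset (Finset V)
  nonempty' : faces.Nonempty
  down_closed : ∀ ⦃F G : Finset V⦄, F ∈ faces → G ⊆ F → G ∈ faces

namespace SimplicialComplex

variable {V : Type} [DecidableEq V]

open scoped Classical in
/-- The facets: the maximal faces with respect to inclusion. -/
def facets (Δ : SimplicialComplex V) : Finset (Finset V) :=
  Δ.faces.filter fun F => ∀ G ∈ Δ.faces, F ⊆ G → F = G

/-- A matching: a set of pairwise disjoint facets. -/
def IsMatching (Δ : SimplicialComplex V) (M : Finset (Finset V)) : Prop :=
  M ⊆ Δ.facets ∧ ∀ F ∈ M, ∀ G ∈ M, F ≠ G → F ∩ G = ∅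

/-- The matching number `ν(Δ)`: the maximum cardinality of a matching. -/
def matchingNumber (Δ : SimplicialComplex V) : ℕ :=
  sSup {r : ℕ | ∃ M : Finset (Finset V), Δ.IsMatching M ∧ M.card = r}

/-- `F` is a leaf of the subcomplex generated by the facet set `S`: either `F` is
the only facet, or there is another facet `G` with `H ∩ F ⊆ G ∩ F` for all
facets `H ≠ F`. -/
def IsLeafIn (S : Finset (Finset V)) (F : Finset V) : Prop :=
  F ∈ S ∧ (S = {F} ∨ ∃ G ∈ S, G ≠ F ∧ ∀ H ∈ S, H ≠ F → H ∩ F ⊆ G ∩ F)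

/-- A simplicial forest: every nonempty subcomplex has a leaf (equivalently,
every connected component is a simplicial tree). -/
def IsForest (Δ : SimplicialComplex V) : Prop :=
  ∀ S ⊆ Δ.facets, S.Nonempty → ∃ F, IsLeafIn S F

/-- Connectedness: any two facets are joined by a chain of facets in which
consecutive facets intersect nontrivially. -/
def Connected (Δ : SimplicialComplex V) : Prop :=
  ∀ F ∈ Δ.facets, ∀ G ∈ Δ.facets,
    Relation.ReflTransGen
      (fun A B => A ∈ Δ.facets ∧ B ∈ Δ.facets ∧ (A ∩ B).Nonempty) F G

/-- A simplicial tree: a connected simplicial forest. -/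
def IsTree (Δ : SimplicialComplex V) : Prop := Δ.Connected ∧ Δ.IsForest

/-- A good leaf: a facet which is a leaf of every subcomplex containing it. -/
def IsGoodLeaf (Δ : SimplicialComplex V) (F : Finset V) : Prop :=
  F ∈ Δ.facets ∧ ∀ S ⊆ Δ.facets, F ∈ S → IsLeafIn S F

/-- Two disjoint facets `F`, `G` form a gap: the induced subcomplex on `F ∪ G`
has facet set exactly `{F, G}`. -/
def FormGap (Δ : SimplicialComplex V) (F G : Finset V) : Prop :=
  F ∈ Δ.facets ∧ G ∈ Δ.facets ∧ F ∩ G = ∅ ∧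
    ∀ H ∈ Δ.facets, H ⊆ F ∪ G → H = F ∨ H = G

/-- A restricted matching: a matching one of whose facets forms a gap with every
other facet of the matching. -/
def IsRestrictedMatching (Δ : SimplicialComplex V) (M : Finset (Finset V)) : Prop :=
  Δ.IsMatching M ∧ ∃ F ∈ M, ∀ G ∈ M, G ≠ F → Δ.FormGap F G

/-- The restricted matching number `ν₀(Δ)`. -/
def restrictedMatchingNumber (Δ : SimplicialComplex V) : ℕ :=
  sSup {r : ℕ | ∃ M : Finset (Finset V), Δ.IsRestrictedMatching M ∧ M.card = r}

/-- An induced matching: a matching `M` such that the facets contained in the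
union of the members of `M` are exactly the members of `M`. -/
def IsInducedMatching (Δ : SimplicialComplex V) (M : Finset (Finset V)) : Prop :=
  Δ.IsMatching M ∧ ∀ H ∈ Δ.facets, H ⊆ M.biUnion id → H ∈ M

/-- The induced matching number `ν₁(Δ)`. -/
def inducedMatchingNumber (Δ : SimplicialComplex V) : ℕ :=
  sSup {r : ℕ | ∃ M : Finset (Finset V), Δ.IsInducedMatching M ∧ M.card = r}

/-- A proper chain of length `n` between the facets `F` and `G`. -/
def ProperChain (Δ : SimplicialComplex V) (F G : Finset V) (n : ℕ) : Prop :=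
  ∃ c : ℕ → Finset V, c 0 = F ∧ c n = G ∧ (∀ i ≤ n, c i ∈ Δ.facets) ∧
    ∀ i < n, (c i ∩ c (i + 1)).card = (c (i + 1)).card - 1

/-- The distance between two facets: the minimal length of a proper chain. -/
def dist (Δ : SimplicialComplex V) (F G : Finset V) : ℕ :=
  sInf {n : ℕ | Δ.ProperChain F G n}

/-- The intersection property for a pure complex whose facets have cardinality
`t` (`= d + 1`): it is connected in codimension 1, and any two facets `F`, `G`
with `|F ∩ G| = t - k` (`1 ≤ k ≤ t`) satisfy `dist(F, G) = k`. -/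
def HasIntersectionProperty (Δ : SimplicialComplex V) (t : ℕ) : Prop :=
  (∀ F ∈ Δ.facets, F.card = t) ∧
    (∀ F ∈ Δ.facets, ∀ G ∈ Δ.facets, ∃ n, Δ.ProperChain F G n) ∧
    ∀ F ∈ Δ.facets, ∀ G ∈ Δ.facets, ∀ k, 1 ≤ k → k ≤ t →
      (F ∩ G).card = t - k → Δ.dist F G = k

end SimplicialComplex

/-- The simplicial complex generated by a finite family of faces. -/
def ofFacets {V : Type} [DecidableEq V] (ℱ : Finset (Finset V)) :
    SimplicialComplex V where
  faces := insert ∅ (ℱ.biUnion Finset.powerset)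
  nonempty' := ⟨∅, Finset.mem_insert_self _ _⟩
  down_closed := by
    intro F G hF hGF
    rcases Finset.mem_insert.mp hF with h | h
    · subst h
      exact Finset.mem_insert.mpr <| Or.inl (Finset.subset_empty.mp hGF)
    · rcases Finset.mem_biUnion.mp h with ⟨A, hA, hFA⟩
      exact Finset.mem_insert.mpr <| Or.inr <| Finset.mem_biUnion.mpr
        ⟨A, hA, Finset.mem_powerset.mpr (hGF.trans (Finset.mem_powerset.mp hFA))⟩

/-- The ideal of `K[x_v : v ∈ V]` generated by the products
`x_{F₁} ⋯ x_{F_k}` over all `k`-matchings `{F₁, …, F_k}` taken from the facet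
set `ℱ`.  For `ℱ = ℱ(Δ)` this is the `k`-th squarefree power `I(Δ)^{[k]}` of the
facet ideal `I(Δ)` (and the facet ideal itself for `k = 1`). -/
def matchPow (K : Type) [Field K] {V : Type} [DecidableEq V]
    (ℱ : Finset (Finset V)) (k : ℕ) : Ideal (MvPolynomial V K) :=
  Ideal.span {p | ∃ M : Finset (Finset V), M ⊆ ℱ ∧
    (∀ F ∈ M, ∀ G ∈ M, F ≠ G → F ∩ G = ∅) ∧ M.card = k ∧
    p = ∏ F ∈ M, ∏ v ∈ F, (X v : MvPolynomial V K)}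

/-- The `k`-th squarefree power `I(Δ)^{[k]}` of the facet ideal of `Δ`. -/
def sqfreePower (K : Type) [Field K] {V : Type} [DecidableEq V]
    (Δ : SimplicialComplex V) (k : ℕ) : Ideal (MvPolynomial V K) :=
  matchPow K Δ.facets k

/-- `p` is a monomial with coefficient `1`. -/
def IsMonomialOne {K : Type} [Field K] {V : Type} (p : MvPolynomial V K) : Prop :=
  ∃ d : V →₀ ℕ, p = monomial d 1

/-- `u` is a minimal monomial generator of the monomial ideal `I`: `u` is a
monomial of `I` which is not strictly divisible by any monomial of `I`. -/
def IsMinGen {K : Type} [Field K] {V : Type} (I : Ideal (MvPolynomial V K))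
    (u : MvPolynomial V K) : Prop :=
  IsMonomialOne u ∧ u ∈ I ∧
    ∀ v : MvPolynomial V K, IsMonomialOne v → v ∈ I → v ∣ u → v = u

/-- A monomial ideal `I` has linear quotients: its minimal monomial generators
can be listed as `f₁, …, f_m` so that each colon ideal
`(f₁, …, f_{i-1}) : (f_i)` is generated by a subset of the variables. -/
def HasLinearQuotients {K : Type} [Field K] {V : Type}
    (I : Ideal (MvPolynomial V K)) : Prop :=
  ∃ L : List (MvPolynomial V K), L.Nodup ∧ (∀ u, u ∈ L ↔ IsMinGen I u) ∧
    ∀ i : ℕ, ∀ hi : i < L.length, 1 ≤ i →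
      ∃ s : Set V,
        Submodule.colon (Ideal.span {q | q ∈ L.take i}) (Ideal.span {L.get ⟨i, hi⟩}) =
          Ideal.span ((fun v => (X v : MvPolynomial V K)) '' s)

/-- The degree of the monomial with exponent vector `d`. -/
def degOf {V : Type} (d : V →₀ ℕ) : ℕ := d.sum fun _ n => n

/-- The edge relation of the induced graph `G_I^{(u,v)}` of Bigdeli–Herzog–Zheng,
for a monomial ideal `I` generated in degree `d`, where `m` is the exponent
vector of `lcm(u, v)`: two minimal monomial generators (identified with their
exponent vectors) dividing `lcm(u, v)` are adjacent when their lcm has degree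
`d + 1`. -/
def EdgeRel (K : Type) [Field K] {V : Type} [DecidableEq V]
    (I : Ideal (MvPolynomial V K)) (d : ℕ) (m : V →₀ ℕ) (u v : V →₀ ℕ) : Prop :=
  IsMinGen I (monomial u (1 : K)) ∧ IsMinGen I (monomial v (1 : K)) ∧
    u ≤ m ∧ v ≤ m ∧ degOf (u ⊔ v) = d + 1

/-- The combinatorial criterion of Bigdeli–Herzog–Zheng for a monomial ideal `I`
generated in degree `d` to be linearly related: any two minimal monomial
generators `u`, `v` are connected by a path in `G_I^{(u,v)}`. -/
def LinearlyRelatedVia (K : Type) [Field K] {V : Type} [DecidableEq V]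
    (I : Ideal (MvPolynomial V K)) (d : ℕ) : Prop :=
  ∀ a b : V →₀ ℕ, IsMinGen I (monomial a (1 : K)) → IsMinGen I (monomial b (1 : K)) →
    Relation.ReflTransGen (EdgeRel K I d (a ⊔ b)) a b

/-- The `t`-path simplicial tree `Γ_{n,t}` of the path graph `P_n` on the
vertices `1, …, n`: its facets are the intervals `F_i = {i, …, i + t - 1}` for
`1 ≤ i ≤ n - t + 1`. -/
def pathFacets (n t : ℕ) : Finset (Finset ℕ) :=
  (Finset.Icc 1 (n - t + 1)).image fun i => Finset.Icc i (i + t - 1)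

/-- The `t`-path simplicial tree `Γ_{n,t}` of the path graph `P_n`. -/
def pathComplex (n t : ℕ) : SimplicialComplex ℕ := ofFacets (pathFacets n t)

/-! A good leaf `F` meets at most one facet of any matching: if `F` is not itself in the
matching `N`, it is a leaf of `N ∪ {F}` with some branch `G ∈ N`, and every other `H ∈ N`
satisfies `H ∩ F ⊆ G ∩ F ⊆ G ∩ H = ∅`. Hence a `(k+1)`-matching whose monomial divides
`x_F · u` loses, after deleting that one facet, nothing outside `u`, and yields a
`k`-matching of `Δ ∖ F` dividing `u`; conversely `x_F` extends any matching of `Δ ∖ F`.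
As all ideals involved are monomial, this comparison of generators computes the colon. -/

section MonomialColon

variable {σ R : Type*} [CommSemiring R]

open Ideal in
theorem MvPolynomial.mem_colon_span_monomial_iff {s : Set (σ →₀ ℕ)} {d : σ →₀ ℕ}
    {p : MvPolynomial σ R} :
    p ∈ (span ((fun t => monomial t (1 : R)) '' s)).colon (span {monomial d (1 : R)}) ↔
      ∀ e ∈ p.support, ∃ t ∈ s, t ≤ e + d := by
  rw [mem_colon_span_singleton, mem_ideal_span_monomial_image]
  constructor
  · intro h e he
    refine h (e + d) ?_
    rw [mem_support_iff, coeff_mul_monomial, mul_one]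
    exact mem_support_iff.mp he
  · intro h m hm
    rw [mem_support_iff, coeff_mul_monomial'] at hm
    split_ifs at hm with hdm
    · rw [mul_one, ← mem_support_iff] at hm
      simpa only [tsub_add_cancel_of_le hdm] using h (m - d) hm
    · exact absurd rfl hm

end MonomialColon

namespace SimplicialComplex

variable {V : Type}

def facetExp (H : Finset V) : V →₀ ℕ := ∑ v ∈ H, Finsupp.single v 1

def matchingExp (M : Finset (Finset V)) : V →₀ ℕ := ∑ H ∈ M, facetExp H

theorem prod_X_eq_monomial_facetExp {K : Type*} [CommSemiring K] (H : Finset V) :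
    ∏ v ∈ H, (X v : MvPolynomial V K) = monomial (facetExp H) 1 :=
  (monomial_sum_one H _).symm

theorem prod_prod_X_eq_monomial_matchingExp {K : Type*} [CommSemiring K]
    (M : Finset (Finset V)) :
    ∏ H ∈ M, ∏ v ∈ H, (X v : MvPolynomial V K) = monomial (matchingExp M) 1 := by
  simp only [prod_X_eq_monomial_facetExp, matchingExp, monomial_sum_one]

theorem matchingExp_mono {M N : Finset (Finset V)} (h : M ⊆ N) :
    matchingExp M ≤ matchingExp N :=
  Finset.sum_le_sum_of_subset h

variable [DecidableEq V]

def matchingsOfCard (ℱ : Finset (Finset V)) (k : ℕ) : Set (Finset (Finset V)) :=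
  {M | M ⊆ ℱ ∧ (∀ A ∈ M, ∀ B ∈ M, A ≠ B → A ∩ B = ∅) ∧ M.card = k}

theorem facetExp_apply (H : Finset V) (v : V) : facetExp H v = if v ∈ H then 1 else 0 := by
  simp [facetExp, Finsupp.finsetSum_apply, Finsupp.single_apply]

theorem matchingExp_le_of_forall_inter_eq_empty {M : Finset (Finset V)} {F : Finset V}
    {e : V →₀ ℕ} (hM : ∀ H ∈ M, F ∩ H = ∅) (hle : matchingExp M ≤ e + facetExp F) :
    matchingExp M ≤ e := by
  intro v
  by_cases hv : v ∈ F
  · have hvM : ∀ H ∈ M, v ∉ H := fun H hH hvH =>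
      (Finset.eq_empty_iff_forall_notMem.mp (hM H hH)) v (Finset.mem_inter.mpr ⟨hv, hvH⟩)
    have hv0 : matchingExp M v = 0 := by
      rw [matchingExp, Finsupp.finsetSum_apply]
      exact Finset.sum_eq_zero fun H hH => by rw [facetExp_apply, if_neg (hvM H hH)]
    exact hv0 ▸ Nat.zero_le _
  · simpa [facetExp_apply, hv] using hle v

theorem matchPow_eq_span_monomial (K : Type) [Field K] (ℱ : Finset (Finset V)) (k : ℕ) :
    matchPow K ℱ k =
      Ideal.span ((fun d => monomial d (1 : K)) '' (matchingExp '' matchingsOfCard ℱ k)) := by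
  rw [← Set.image_comp, matchPow]
  congr 1
  ext p
  simp only [Set.mem_image, Function.comp_apply, ← prod_prod_X_eq_monomial_matchingExp]
  constructor
  · rintro ⟨M, hℱ, hpd, hcard, rfl⟩
    exact ⟨M, ⟨hℱ, hpd, hcard⟩, rfl⟩
  · rintro ⟨M, ⟨hℱ, hpd, hcard⟩, rfl⟩
    exact ⟨M, hℱ, hpd, hcard, rfl⟩

theorem IsGoodLeaf.exists_forall_ne_inter_eq_empty {Δ : SimplicialComplex V} {F : Finset V}
    (hF : Δ.IsGoodLeaf F) {N : Finset (Finset V)} (hN : N ⊆ Δ.facets)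
    (hpd : ∀ A ∈ N, ∀ B ∈ N, A ≠ B → A ∩ B = ∅) (hne : N.Nonempty) :
    ∃ G ∈ N, ∀ H ∈ N, H ≠ G → F ∩ H = ∅ := by
  by_cases hFN : F ∈ N
  · exact ⟨F, hFN, fun H hH hHF => hpd F hFN H hH hHF.symm⟩
  obtain ⟨-, hsingle | ⟨G, hG, hGF, hbranch⟩⟩ :=
    hF.2 (insert F N) (Finset.insert_subset hF.1 hN) (Finset.mem_insert_self F N)
  · obtain ⟨H, hH⟩ := hne
    have hHF : H = F := Finset.mem_singleton.mp (hsingle ▸ Finset.mem_insert_of_mem hH)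
    exact absurd (hHF ▸ hH) hFN
  have hGN : G ∈ N := (Finset.mem_insert.mp hG).resolve_left hGF
  refine ⟨G, hGN, fun H hH hHG => ?_⟩
  have hHF : H ∩ F ⊆ G ∩ F :=
    hbranch H (Finset.mem_insert_of_mem hH) fun h => hFN (h ▸ hH)
  have hHFG : H ∩ F ⊆ H ∩ G :=
    Finset.subset_inter Finset.inter_subset_left (hHF.trans Finset.inter_subset_left)
  rw [Finset.inter_comm, ← Finset.subset_empty, ← hpd H hH G hGN hHG]
  exact hHFG

theorem IsGoodLeaf.exists_erase_mem_matchingsOfCard {Δ : SimplicialComplex V} {F : Finset V}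
    (hF : Δ.IsGoodLeaf F) {k : ℕ} {N : Finset (Finset V)}
    (hN : N ∈ matchingsOfCard Δ.facets (k + 1)) :
    ∃ G ∈ N, N.erase G ∈ matchingsOfCard (Δ.facets.filter fun G => F ∩ G = ∅) k := by
  obtain ⟨hℱ, hpd, hcard⟩ := hN
  obtain ⟨G, hGN, hdisj⟩ :=
    hF.exists_forall_ne_inter_eq_empty hℱ hpd (Finset.card_pos.mp (by omega))
  refine ⟨G, hGN, fun H hH => ?_, fun A hA B hB =>
    hpd A (Finset.mem_of_mem_erase hA) B (Finset.mem_of_mem_erase hB), ?_⟩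
  · obtain ⟨hHG, hHN⟩ := Finset.mem_erase.mp hH
    exact Finset.mem_filter.mpr ⟨hℱ hHN, hdisj H hHN hHG⟩
  · rw [Finset.card_erase_of_mem hGN, hcard, Nat.add_sub_cancel]

theorem insert_mem_matchingsOfCard {ℱ : Finset (Finset V)} {F : Finset V} (hF : F ∈ ℱ)
    (hFne : F.Nonempty) {k : ℕ} {M : Finset (Finset V)}
    (hM : M ∈ matchingsOfCard (ℱ.filter fun G => F ∩ G = ∅) k) :
    insert F M ∈ matchingsOfCard ℱ (k + 1) := by
  obtain ⟨hℱ, hpd, hcard⟩ := hM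
  have hdisj : ∀ H ∈ M, F ∩ H = ∅ := fun H hH => (Finset.mem_filter.mp (hℱ hH)).2
  have hFM : F ∉ M := fun h => hFne.ne_empty (Finset.inter_self F ▸ hdisj F h)
  refine ⟨Finset.insert_subset hF (hℱ.trans (Finset.filter_subset _ _)), ?_, ?_⟩
  · simp only [Finset.mem_insert]
    rintro A (rfl | hA) B (rfl | hB) hAB
    · exact absurd rfl hAB
    · exact hdisj B hB
    · rw [Finset.inter_comm]
      exact hdisj A hA
    · exact hpd A hA B hB hAB
  · rw [Finset.card_insert_of_notMem hFM, hcard]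

theorem IsGoodLeaf.exists_matchingExp_le_add_iff {Δ : SimplicialComplex V} {F : Finset V}
    (hF : Δ.IsGoodLeaf F) (hFne : F.Nonempty) (k : ℕ) (e : V →₀ ℕ) :
    (∃ N ∈ matchingsOfCard Δ.facets (k + 1), matchingExp N ≤ e + facetExp F) ↔
      ∃ M ∈ matchingsOfCard (Δ.facets.filter fun G => F ∩ G = ∅) k, matchingExp M ≤ e := by
  constructor
  · rintro ⟨N, hN, hle⟩
    obtain ⟨G, hGN, hM⟩ := hF.exists_erase_mem_matchingsOfCard hN
    refine ⟨N.erase G, hM, matchingExp_le_of_forall_inter_eq_empty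
      (fun H hH => (Finset.mem_filter.mp (hM.1 hH)).2) ?_⟩
    exact (matchingExp_mono (Finset.erase_subset G N)).trans hle
  · rintro ⟨M, hM, hle⟩
    have hFM : F ∉ M := fun h => hFne.ne_empty <|
      Finset.inter_self F ▸ (Finset.mem_filter.mp (hM.1 h)).2
    refine ⟨insert F M, insert_mem_matchingsOfCard hF.1 hFne hM, ?_⟩
    rw [matchingExp, Finset.sum_insert hFM, add_comm]
    exact add_le_add_left hle _

end SimplicialComplex

open SimplicialComplex in
theorem colon_sqfreePower_goodLeaf_general
    (K : Type) [Field K] {V : Type} [DecidableEq V]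
    (Δ : SimplicialComplex V)
    (F : Finset V) (hF : Δ.IsGoodLeaf F) (hFne : F.Nonempty)
    (k : ℕ) :
    Submodule.colon (sqfreePower K Δ (k + 1))
        (Ideal.span {∏ v ∈ F, (X v : MvPolynomial V K)}) =
      matchPow K (Δ.facets.filter fun G => F ∩ G = ∅) k := by
  ext p
  rw [sqfreePower, matchPow_eq_span_monomial, matchPow_eq_span_monomial,
    prod_X_eq_monomial_facetExp, mem_colon_span_monomial_iff, mem_ideal_span_monomial_image]
  refine forall₂_congr fun e _ => ?_
  simpa only [Set.exists_mem_image] using hF.exists_matchingExp_le_add_iff hFne k e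

/-- For a good leaf `F` of a simplicial forest `Δ` with facet
monomial `f`, one has `I(Δ)^{[k+1]} : (f) = I(Δ∖F)^{[k]}` for `1 ≤ k ≤ ν(Δ)`,
where `Δ∖F` is the subcomplex on the facets of `Δ` disjoint from `F`. -/
theorem colon_sqfreePower_goodLeaf
    (K : Type) [Field K] {V : Type} [DecidableEq V]
    (Δ : SimplicialComplex V) (hΔ : Δ.IsForest)
    (F : Finset V) (hF : Δ.IsGoodLeaf F) (hFne : F.Nonempty)
    (k : ℕ) (hk1 : 1 ≤ k) (hk2 : k ≤ Δ.matchingNumber) :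
    Submodule.colon (sqfreePower K Δ (k + 1))
        (Ideal.span {∏ v ∈ F, (X v : MvPolynomial V K)}) =
      matchPow K (Δ.facets.filter fun G => F ∩ G = ∅) k :=
  colon_sqfreePower_goodLeaf_general K Δ F hF hFne k

end
end

section
/- For all integers t ≥ 2 and n ≥ t + 1, the restricted matching number of the t-path simplicial tree of the path graph P_n satisfies ν₀(Γ_{n,t}) = ⌊(n − 1)/t⌋. -/
noncomputable section

open Finset MvPolynomial

/-! The facets of `Γ_{n,t}` are the length-`t` intervals of `[1, n]`, and two disjoint ones form
a gap exactly when some vertex lies strictly between them. So if the interval `F` starting at `i`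
forms a gap with every other member of a matching `M`, the vertex next to `F` (`i - 1` if `i ≥ 2`,
otherwise `t + 1 ≤ n`) is covered by no member of `M`, whence `|M| t + 1 ≤ n`. Conversely, the
intervals starting at `1` and at `j t + 2` for `1 ≤ j < ⌊(n - 1)/t⌋` form a restricted matching
of that size. -/

namespace SimplicialComplex

variable {V : Type} [DecidableEq V]

theorem FormGap.symm {Δ : SimplicialComplex V} {F G : Finset V} (h : Δ.FormGap F G) :
    Δ.FormGap G F := by
  obtain ⟨hF, hG, hFG, hmax⟩ := h
  refine ⟨hG, hF, by rwa [inter_comm], fun H hH hsub => (hmax H hH ?_).symm⟩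
  rwa [union_comm]

theorem IsMatching.card_biUnion {Δ : SimplicialComplex V} {M : Finset (Finset V)}
    (hM : Δ.IsMatching M) : (M.biUnion id).card = ∑ F ∈ M, F.card :=
  Finset.card_biUnion fun _ hF _ hG hFG => disjoint_iff_inter_eq_empty.mpr (hM.2 _ hF _ hG hFG)

end SimplicialComplex

section OfFacets

variable {V : Type} [DecidableEq V] {ℱ : Finset (Finset V)}

theorem mem_faces_ofFacets (hℱ : ℱ.Nonempty) {F : Finset V} :
    F ∈ (ofFacets ℱ).faces ↔ ∃ A ∈ ℱ, F ⊆ A := by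
  simp only [ofFacets, mem_insert, mem_biUnion, mem_powerset]
  constructor
  · rintro (rfl | h)
    · obtain ⟨A, hA⟩ := hℱ
      exact ⟨A, hA, empty_subset A⟩
    · exact h
  · exact Or.inr

theorem mem_facets_ofFacets (hℱ : ℱ.Nonempty) (hanti : IsAntichain (· ⊆ ·) (ℱ : Set (Finset V)))
    {F : Finset V} : F ∈ (ofFacets ℱ).facets ↔ F ∈ ℱ := by
  simp only [SimplicialComplex.facets, mem_filter, mem_faces_ofFacets hℱ]
  constructor
  · rintro ⟨⟨A, hA, hFA⟩, hmax⟩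
    rwa [hmax A ⟨A, hA, subset_rfl⟩ hFA]
  · intro hF
    refine ⟨⟨F, hF, subset_rfl⟩, ?_⟩
    rintro G ⟨A, hA, hGA⟩ hFG
    have hFA : F = A := hanti.eq hF hA (hFG.trans hGA)
    exact subset_antisymm hFG (hFA ▸ hGA)

end OfFacets

section PathComplex

variable {n t i j : ℕ}

theorem start_eq_of_Icc_subset_Icc (ht : 0 < t)
    (h : Icc i (i + t - 1) ⊆ Icc j (j + t - 1)) : i = j := by
  rw [Icc_subset_Icc_iff (by omega)] at h
  omega

theorem Icc_inter_Icc_eq_empty_iff (ht : 0 < t) :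
    Icc i (i + t - 1) ∩ Icc j (j + t - 1) = ∅ ↔ i + t ≤ j ∨ j + t ≤ i := by
  constructor
  · intro h
    by_contra! hlap
    have hmem : max i j ∈ Icc i (i + t - 1) ∩ Icc j (j + t - 1) := by
      simp only [mem_inter, mem_Icc]
      omega
    simp [h] at hmem
  · intro h
    ext v
    simp only [mem_inter, mem_Icc, notMem_empty, iff_false]
    omega

theorem mem_pathFacets {F : Finset ℕ} :
    F ∈ pathFacets n t ↔ ∃ i, (1 ≤ i ∧ i ≤ n - t + 1) ∧ Icc i (i + t - 1) = F := by
  simp only [pathFacets, mem_image, mem_Icc]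

theorem Icc_mem_pathFacets (hi : 1 ≤ i) (hin : i ≤ n - t + 1) :
    Icc i (i + t - 1) ∈ pathFacets n t :=
  mem_pathFacets.mpr ⟨i, ⟨hi, hin⟩, rfl⟩

theorem isAntichain_pathFacets (ht : 0 < t) :
    IsAntichain (· ⊆ ·) (pathFacets n t : Set (Finset ℕ)) := by
  rintro _ hF _ hG hne hsub
  obtain ⟨i, -, rfl⟩ := mem_pathFacets.mp hF
  obtain ⟨j, -, rfl⟩ := mem_pathFacets.mp hG
  exact hne (start_eq_of_Icc_subset_Icc ht hsub ▸ rfl)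

theorem mem_facets_pathComplex (ht : 0 < t) {F : Finset ℕ} :
    F ∈ (pathComplex n t).facets ↔ F ∈ pathFacets n t :=
  mem_facets_ofFacets ⟨_, Icc_mem_pathFacets le_rfl (Nat.le_add_left 1 _)⟩
    (isAntichain_pathFacets ht)

/-- The facet starting at `i + 1` lies in the union of two abutting facets. -/
theorem not_formGap_pathComplex_Icc_add (ht : 2 ≤ t) (hi : 1 ≤ i) (hin : i + t ≤ n - t + 1) :
    ¬ (pathComplex n t).FormGap (Icc i (i + t - 1)) (Icc (i + t) (i + t + t - 1)) := by
  rintro ⟨-, -, -, hmax⟩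
  have hshift : Icc (i + 1) (i + 1 + t - 1) ∈ (pathComplex n t).facets :=
    (mem_facets_pathComplex (by omega)).mpr (Icc_mem_pathFacets (by omega) (by omega))
  have hsub : Icc (i + 1) (i + 1 + t - 1) ⊆ Icc i (i + t - 1) ∪ Icc (i + t) (i + t + t - 1) := by
    intro v
    simp only [mem_union, mem_Icc]
    omega
  rcases hmax _ hshift hsub with h | h <;>
    have := start_eq_of_Icc_subset_Icc (by omega) h.le <;> omega

/-- The vertex `i + t` is a hole between the two facets. -/
theorem formGap_pathComplex_of_add_lt (ht : 0 < t) (hi : 1 ≤ i) (hj : j ≤ n - t + 1)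
    (hij : i + t < j) :
    (pathComplex n t).FormGap (Icc i (i + t - 1)) (Icc j (j + t - 1)) := by
  refine ⟨(mem_facets_pathComplex ht).mpr (Icc_mem_pathFacets hi (by omega)),
    (mem_facets_pathComplex ht).mpr (Icc_mem_pathFacets (by omega) hj),
    (Icc_inter_Icc_eq_empty_iff ht).mpr (by omega), ?_⟩
  intro H hH hsub
  obtain ⟨l, -, rfl⟩ := mem_pathFacets.mp ((mem_facets_pathComplex ht).mp hH)
  have hfirst := hsub (left_mem_Icc.mpr (by omega : l ≤ l + t - 1))
  have hlast := hsub (right_mem_Icc.mpr (by omega : l ≤ l + t - 1))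
  have hhole : i + t ∉ Icc l (l + t - 1) := fun h => by
    have := hsub h
    simp only [mem_union, mem_Icc] at this
    omega
  simp only [mem_union, mem_Icc] at hfirst hlast hhole
  have : l = i ∨ l = j := by omega
  rcases this with rfl | rfl
  exacts [Or.inl rfl, Or.inr rfl]

theorem formGap_pathComplex_iff (ht : 2 ≤ t) (hi : 1 ≤ i ∧ i ≤ n - t + 1)
    (hj : 1 ≤ j ∧ j ≤ n - t + 1) :
    (pathComplex n t).FormGap (Icc i (i + t - 1)) (Icc j (j + t - 1)) ↔ i + t < j ∨ j + t < i := by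
  constructor
  · intro hgap
    have hsep := (Icc_inter_Icc_eq_empty_iff (by omega)).mp hgap.2.2.1
    rcases Nat.lt_or_ge (i + t) j with h | h
    · exact Or.inl h
    rcases Nat.lt_or_ge (j + t) i with h' | h'
    · exact Or.inr h'
    rcases hsep with hsep | hsep
    · obtain rfl : j = i + t := by omega
      exact absurd hgap (not_formGap_pathComplex_Icc_add ht hi.1 hj.2)
    · obtain rfl : i = j + t := by omega
      exact absurd hgap.symm (not_formGap_pathComplex_Icc_add ht hj.1 hi.2)
  · rintro (h | h)
    · exact formGap_pathComplex_of_add_lt (by omega) hi.1 hj.2 h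
    · exact (formGap_pathComplex_of_add_lt (by omega) hj.1 hi.2 h).symm

theorem SimplicialComplex.IsMatching.card_mul_add_one_le_of_pathComplex
    {M : Finset (Finset ℕ)} (ht : 0 < t) (htn : t ≤ n) (hM : (pathComplex n t).IsMatching M) {v : ℕ}
    (hv : 1 ≤ v ∧ v ≤ n) (hfree : ∀ G ∈ M, v ∉ G) : M.card * t + 1 ≤ n := by
  have hfacet : ∀ G ∈ M, ∃ k, (1 ≤ k ∧ k ≤ n - t + 1) ∧ Icc k (k + t - 1) = G := fun G hG =>
    mem_pathFacets.mp ((mem_facets_pathComplex ht).mp (hM.1 hG))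
  have hcover : M.biUnion id ⊆ Icc 1 n := by
    intro w hw
    obtain ⟨G, hG, hwG⟩ := mem_biUnion.mp hw
    obtain ⟨k, hk, rfl⟩ := hfacet G hG
    simp only [id, mem_Icc] at hwG ⊢
    omega
  have hcard : (M.biUnion id).card = M.card * t := by
    rw [hM.card_biUnion, sum_const_nat]
    intro G hG
    obtain ⟨k, -, rfl⟩ := hfacet G hG
    rw [Nat.card_Icc]
    omega
  have hv' : v ∉ M.biUnion id := by
    simpa only [mem_biUnion, id, not_exists, not_and] using hfree
  calc M.card * t + 1 = (insert v (M.biUnion id)).card := by rw [card_insert_of_notMem hv', hcard]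
    _ ≤ (Icc 1 n).card := card_le_card (insert_subset (mem_Icc.mpr hv) hcover)
    _ = n := by rw [Nat.card_Icc, Nat.add_sub_cancel]

theorem SimplicialComplex.IsRestrictedMatching.card_mul_add_one_le_of_pathComplex
    {M : Finset (Finset ℕ)} (ht : 2 ≤ t) (hn : t + 1 ≤ n)
    (hM : (pathComplex n t).IsRestrictedMatching M) : M.card * t + 1 ≤ n := by
  obtain ⟨hmatch, F, hF, hgap⟩ := hM
  have hfacet : ∀ G ∈ M, ∃ k, (1 ≤ k ∧ k ≤ n - t + 1) ∧ Icc k (k + t - 1) = G := fun G hG =>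
    mem_pathFacets.mp ((mem_facets_pathComplex (by omega)).mp (hmatch.1 hG))
  obtain ⟨i, hi, rfl⟩ := hfacet F hF
  obtain ⟨v, hv, hvi⟩ : ∃ v, (1 ≤ v ∧ v ≤ n) ∧ (v + 1 = i ∨ v = i + t) := by
    rcases Nat.lt_or_ge 1 i with h | h
    · exact ⟨i - 1, by omega, by omega⟩
    · exact ⟨i + t, by omega, by omega⟩
  refine hmatch.card_mul_add_one_le_of_pathComplex (by omega) (by omega) hv fun G hG hvG => ?_
  obtain ⟨k, hk, rfl⟩ := hfacet G hG
  have hsep : k = i ∨ k + t < i ∨ i + t < k := by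
    by_cases hki : k = i
    · exact Or.inl hki
    · exact Or.inr ((formGap_pathComplex_iff ht hk hi).mp
        (hgap _ hG fun h => hki (start_eq_of_Icc_subset_Icc (by omega) h.le)).symm)
  rw [mem_Icc] at hvG
  omega

theorem isRestrictedMatching_pathComplex_image (ht : 2 ≤ t) {S : Finset ℕ}
    (hS : ∀ k ∈ S, 1 ≤ k ∧ k ≤ n - t + 1) (hsep : ∀ k ∈ S, ∀ l ∈ S, k < l → k + t ≤ l)
    (hi : i ∈ S) (hgap : ∀ k ∈ S, k ≠ i → k + t < i ∨ i + t < k) :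
    (pathComplex n t).IsRestrictedMatching (S.image fun k => Icc k (k + t - 1)) := by
  have hsep' : ∀ k ∈ S, ∀ l ∈ S, k ≠ l → k + t ≤ l ∨ l + t ≤ k := fun k hk l hl hkl =>
    (Nat.lt_or_gt_of_ne hkl).imp (hsep k hk l hl) (hsep l hl k hk)
  refine ⟨⟨?_, ?_⟩, _, mem_image_of_mem _ hi, ?_⟩
  · intro G hG
    obtain ⟨k, hk, rfl⟩ := mem_image.mp hG
    exact (mem_facets_pathComplex (by omega)).mpr (Icc_mem_pathFacets (hS k hk).1 (hS k hk).2)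
  · simp only [mem_image]
    rintro _ ⟨k, hk, rfl⟩ _ ⟨l, hl, rfl⟩ hne
    exact (Icc_inter_Icc_eq_empty_iff (by omega)).mpr
      (hsep' k hk l hl fun h => hne (h ▸ rfl))
  · simp only [mem_image]
    rintro _ ⟨k, hk, rfl⟩ hne
    exact (formGap_pathComplex_iff ht (hS i hi) (hS k hk)).mpr
      ((hgap k hk fun h => hne (h ▸ rfl)).symm)

theorem exists_isRestrictedMatching_pathComplex_card_eq (ht : 2 ≤ t) (hn : t + 1 ≤ n) :
    ∃ M, (pathComplex n t).IsRestrictedMatching M ∧ M.card = (n - 1) / t := by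
  set k := (n - 1) / t
  have hk : 1 ≤ k := (Nat.one_le_div_iff (by omega)).mpr (by omega)
  have hkt : k * t ≤ n - 1 := Nat.div_mul_le_self _ _
  have hmul : ∀ a b, a ≤ b → a * t ≤ b * t := fun a b h => Nat.mul_le_mul_right t h
  set S := insert 1 ((Ico 1 k).image fun j => j * t + 2)
  have hS : ∀ a ∈ S, 1 ≤ a ∧ a ≤ n - t + 1 := by
    simp only [S, mem_insert, mem_image, mem_Ico]
    rintro _ (rfl | ⟨j, hj, rfl⟩)
    · omega
    · have := hmul (j + 1) k (by omega)
      rw [Nat.add_one_mul] at this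
      omega
  have hsep : ∀ a ∈ S, ∀ b ∈ S, a < b → a + t ≤ b := by
    simp only [S, mem_insert, mem_image, mem_Ico]
    rintro _ (rfl | ⟨j, hj, rfl⟩) _ (rfl | ⟨j', hj', rfl⟩) hab
    · omega
    · have := hmul 1 j' hj'.1; omega
    · omega
    · have hjj' : j < j' := Nat.lt_of_mul_lt_mul_right (a := t) (by omega)
      have := hmul (j + 1) j' hjj'
      rw [Nat.add_one_mul] at this
      omega
  have hgap : ∀ a ∈ S, a ≠ 1 → a + t < 1 ∨ 1 + t < a := by
    simp only [S, mem_insert, mem_image, mem_Ico]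
    rintro _ (rfl | ⟨j, hj, rfl⟩) hne
    · exact absurd rfl hne
    · have := hmul 1 j hj.1; omega
  refine ⟨_, isRestrictedMatching_pathComplex_image ht hS hsep (mem_insert_self 1 _) hgap, ?_⟩
  have hinj : Set.InjOn (fun a => Icc a (a + t - 1)) S := fun a _ b _ h =>
    start_eq_of_Icc_subset_Icc (by omega) (le_of_eq h)
  have h1 : 1 ∉ (Ico 1 k).image fun j => j * t + 2 := by simp
  rw [card_image_of_injOn hinj, card_insert_of_notMem h1,
    card_image_of_injective _ fun a b h => Nat.eq_of_mul_eq_mul_right (by omega)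
      (Nat.add_right_cancel h), Nat.card_Ico]
  omega

end PathComplex

/-- `ν₀(Γ_{n,t}) = ⌊(n - 1) / t⌋` for `n ≥ t + 1`. -/
theorem restrictedMatchingNumber_pathComplex (n t : ℕ) (ht : 2 ≤ t) (hn : t + 1 ≤ n) :
    (pathComplex n t).restrictedMatchingNumber = (n - 1) / t := by
  refine IsGreatest.csSup_eq ⟨exists_isRestrictedMatching_pathComplex_card_eq ht hn, ?_⟩
  rintro _ ⟨M, hM, rfl⟩
  rw [Nat.le_div_iff_mul_le (by omega)]
  have := hM.card_mul_add_one_le_of_pathComplex ht hn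
  omega

end
end
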